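/- arXiv:1406.0466 — 4 statements merged into one kernel-verified Lean document; each statement's English description precedes it below -/
import Mathlib

section
/- For every positive integer n, the number of pairs (x, y) of integers with x² + y² = n equals 4 times the sum over odd divisors d of n of (-1)^((d-1)/2). -/
/-!
The pairs `(x, y)` are the Gaussian integers `x + yi` of norm `n`. Since `ℤ[i]` has exactly four
units, their number is four times the number of associate classes of norm `n`. By unique
factorisation this class count is multiplicative in `n`, so it suffices to compare it with
`∑ d ∣ n, χ₄ d` on prime powers `p ^ k`: `2 = -i (1 + i) ^ 2` ramifies, leaving the single class
of `(1 + i) ^ k`; a prime `p ≡ 3 (mod 4)` stays prime of norm `p ^ 2`, leaving one class or none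
as `k` is even or odd; a prime `p ≡ 1 (mod 4)` splits as `π * star π` with non-associate factors,
giving the `k + 1` classes of `π ^ j * star π ^ (k - j)`.
-/

theorem Associates.card_eq_card_image_mk_mul_card_units {α : Type*} [CommMonoidWithZero α]
    [IsLeftCancelMulZero α] {S : Set α} (h0 : 0 ∉ S)
    (hS : ∀ ⦃x y⦄, x ∈ S → Associated x y → y ∈ S) :
    Nat.card S = Nat.card (Associates.mk '' S) * Nat.card αˣ := by
  let rep (a : Associates.mk '' S) : α := a.2.choose
  have rep_mem (a : Associates.mk '' S) : rep a ∈ S := a.2.choose_spec.1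
  have mk_rep (a : Associates.mk '' S) : Associates.mk (rep a) = a := a.2.choose_spec.2
  let f (p : Associates.mk '' S × αˣ) : S := ⟨rep p.1 * p.2, hS (rep_mem p.1) ⟨p.2, rfl⟩⟩
  have hf : f.Bijective := by
    constructor
    · rintro ⟨a, u⟩ ⟨b, v⟩ huv
      have hval : rep a * u = rep b * v := congrArg Subtype.val huv
      obtain rfl : a = b := Subtype.ext <| by
        rw [← mk_rep a, ← mk_rep b, Associates.mk_eq_mk_iff_associated]
        exact Associated.trans ⟨u, hval⟩ (Associated.symm ⟨v, rfl⟩)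
      have hne : rep a ≠ 0 := fun h => h0 (h ▸ rep_mem a)
      rw [Units.ext (mul_left_cancel₀ hne hval)]
    · rintro ⟨z, hz⟩
      obtain ⟨u, hu⟩ : Associated (rep ⟨_, z, hz, rfl⟩) z :=
        Associates.mk_eq_mk_iff_associated.1 (mk_rep _)
      exact ⟨(_, u), Subtype.ext hu⟩
  rw [← Nat.card_prod, Nat.card_congr (Equiv.ofBijective f hf)]

theorem Associated.left_of_mul_of_isCoprime {R : Type*} [CommSemiring R] [IsLeftCancelMulZero R]
    {x y x' y' : R} (h : Associated (x * y) (x' * y')) (hxy' : IsCoprime x y')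
    (hx'y : IsCoprime x' y) : Associated x x' :=
  associated_of_dvd_dvd (hxy'.dvd_of_dvd_mul_right ((dvd_mul_right x y).trans h.dvd))
    (hx'y.dvd_of_dvd_mul_right ((dvd_mul_right x' y').trans h.symm.dvd))

local notation "ℤ[i]" => GaussianInt

namespace GaussianInt

theorem isUnit_iff_norm_eq_one {z : ℤ[i]} : IsUnit z ↔ z.norm = 1 :=
  (Zsqrtd.norm_eq_one_iff' (by norm_num) z).symm

theorem norm_pow (z : ℤ[i]) (k : ℕ) : (z ^ k).norm = z.norm ^ k :=
  map_pow Zsqrtd.normMonoidHom z k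

theorem dvd_natCast_of_norm_eq {z : ℤ[i]} {n : ℕ} (h : z.norm = n) : z ∣ (n : ℤ[i]) :=
  ⟨star z, by rw [← Int.cast_natCast, ← h, Zsqrtd.norm_eq_mul_conj]⟩

theorem norm_mk (a b : ℤ) : (⟨a, b⟩ : ℤ[i]).norm = a ^ 2 + b ^ 2 := by
  rw [Zsqrtd.norm_def]
  ring

theorem norm_dvd_norm {x y : ℤ[i]} (h : x ∣ y) : x.norm ∣ y.norm :=
  map_dvd Zsqrtd.normMonoidHom h

theorem prime_of_natAbs_norm_prime {z : ℤ[i]} (h : z.norm.natAbs.Prime) : Prime z := by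
  refine Irreducible.prime ⟨fun hz => h.ne_one (Zsqrtd.norm_eq_one_iff.2 hz), fun a b hab => ?_⟩
  rw [hab, Zsqrtd.norm_mul, Int.natAbs_mul] at h
  exact (Nat.prime_mul_iff.1 h).elim (fun h => Or.inr (Zsqrtd.norm_eq_one_iff.1 h.2))
    (fun h => Or.inl (Zsqrtd.norm_eq_one_iff.1 h.2))

theorem setOf_norm_eq_one :
    {z : ℤ[i] | z.norm = 1} = {1, -1, ⟨0, 1⟩, ⟨0, -1⟩} := by
  ext ⟨a, b⟩
  simp only [Set.mem_ofPred_eq, Set.mem_insert_iff, Set.mem_singleton_iff, Zsqrtd.norm_def,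
    Zsqrtd.ext_iff, Zsqrtd.re_one, Zsqrtd.im_one, Zsqrtd.re_neg, Zsqrtd.im_neg]
  constructor
  · intro h
    have ha : |a| ≤ 1 := abs_le_one_iff_mul_self_le_one.2 (by nlinarith [mul_self_nonneg b])
    have hb : |b| ≤ 1 := abs_le_one_iff_mul_self_le_one.2 (by nlinarith [mul_self_nonneg a])
    rcases Int.abs_le_one_iff.1 ha with rfl | rfl | rfl <;>
      rcases Int.abs_le_one_iff.1 hb with rfl | rfl | rfl <;> simp_all
  · rintro (⟨rfl, rfl⟩ | ⟨rfl, rfl⟩ | ⟨rfl, rfl⟩ | ⟨rfl, rfl⟩) <;> norm_num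

theorem card_units : Nat.card ℤ[i]ˣ = 4 := by
  have hrange : Set.range ((↑) : ℤ[i]ˣ → ℤ[i]) = {z | z.norm = 1} := by
    ext z
    exact isUnit_iff_norm_eq_one
  rw [← Nat.card_range_of_injective Units.val_injective, hrange, setOf_norm_eq_one]
  simp [Zsqrtd.ext_iff]

theorem re_eq_zero_or_im_eq_zero_or_of_associated_star {z : ℤ[i]} (h : Associated z (star z)) :
    z.re = 0 ∨ z.im = 0 ∨ z.re = z.im ∨ z.re = -z.im := by
  obtain ⟨u, hu⟩ := h
  have hu1 : (u : ℤ[i]) ∈ {z : ℤ[i] | z.norm = 1} := isUnit_iff_norm_eq_one.1 u.isUnit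
  simp only [setOf_norm_eq_one, Set.mem_insert_iff, Set.mem_singleton_iff] at hu1
  obtain ⟨a, b⟩ := z
  rcases hu1 with h | h | h | h <;>
    simp only [h, Zsqrtd.ext_iff, Zsqrtd.re_mul, Zsqrtd.im_mul, Zsqrtd.star_mk,
      Zsqrtd.re_one, Zsqrtd.im_one, Zsqrtd.re_neg, Zsqrtd.im_neg] at hu ⊢ <;> omega

def normClasses (n : ℕ) : Set (Associates ℤ[i]) := Associates.mk '' {z | z.norm = n}

theorem mk_mem_normClasses {z : ℤ[i]} {n : ℕ} : Associates.mk z ∈ normClasses n ↔ z.norm = n :=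
  ⟨fun ⟨w, hw, hwz⟩ => hw ▸ (Zsqrtd.norm_eq_of_associated (by norm_num)
    (Associates.mk_eq_mk_iff_associated.1 hwz)).symm, fun h => ⟨z, h, rfl⟩⟩

theorem card_setOf_norm_eq {n : ℕ} (hn : n ≠ 0) :
    Nat.card {z : ℤ[i] | z.norm = n} = Nat.card (normClasses n) * 4 := by
  rw [← card_units]
  refine Associates.card_eq_card_image_mk_mul_card_units ?_ fun x y hx hxy => ?_
  · simp only [Set.mem_ofPred_eq, Zsqrtd.norm_zero]
    exact_mod_cast hn.symm
  · exact (Zsqrtd.norm_eq_of_associated (by norm_num) hxy).symm.trans hx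

theorem mul_mem_normClasses {a b : Associates ℤ[i]} {m n : ℕ} (ha : a ∈ normClasses m)
    (hb : b ∈ normClasses n) : a * b ∈ normClasses (m * n) := by
  obtain ⟨x, hx, rfl⟩ := ha
  obtain ⟨y, hy, rfl⟩ := hb
  refine ⟨x * y, ?_, rfl⟩
  simp_all [Zsqrtd.norm_mul]

theorem isCoprime_of_norm_eq {m n : ℕ} (h : m.Coprime n) {x y : ℤ[i]} (hx : x.norm = m)
    (hy : y.norm = n) : IsCoprime x y :=
  (h.cast.of_isCoprime_of_dvd_left (dvd_natCast_of_norm_eq hx)).of_isCoprime_of_dvd_right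
    (dvd_natCast_of_norm_eq hy)

theorem exists_mul_eq_of_norm_eq_mul {m n : ℕ} (hm : m ≠ 0) (hn : n ≠ 0) (h : m.Coprime n)
    {z : ℤ[i]} (hz : z.norm = (m * n : ℕ)) :
    ∃ x y, x * y = z ∧ x.norm = m ∧ y.norm = n := by
  have hdvd : z ∣ (m : ℤ[i]) * n := by
    rw [← Nat.cast_mul]
    exact dvd_natCast_of_norm_eq hz
  obtain ⟨x, y, hxm, hyn, rfl⟩ := exists_dvd_and_dvd_of_dvd_mul hdvd
  have hmn : x.norm * y.norm = m * n := by rw [← Zsqrtd.norm_mul, hz, Nat.cast_mul]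
  have hco : IsCoprime (m : ℤ) n := Nat.isCoprime_iff_coprime.2 h
  have hxm : x.norm ∣ m := by
    have hxmm : x.norm ∣ m * m := by
      simpa [Zsqrtd.norm_natCast] using norm_dvd_norm hxm
    exact ((hco.mul_left hco).of_isCoprime_of_dvd_left hxmm).dvd_of_dvd_mul_right
      ⟨y.norm, hmn.symm⟩
  have hyn : y.norm ∣ n := by
    have hynn : y.norm ∣ n * n := by
      simpa [Zsqrtd.norm_natCast] using norm_dvd_norm hyn
    exact ((hco.symm.mul_left hco.symm).of_isCoprime_of_dvd_left hynn).dvd_of_dvd_mul_left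
      ⟨x.norm, by rw [← hmn, mul_comm]⟩
  have hm0 : (0 : ℤ) < m := by positivity
  have hn0 : (0 : ℤ) < n := by positivity
  have hx_le := Int.le_of_dvd hm0 hxm
  have hy_le := Int.le_of_dvd hn0 hyn
  have hx0 := GaussianInt.norm_nonneg x
  have hy0 := GaussianInt.norm_nonneg y
  refine ⟨x, y, rfl, ?_, ?_⟩
  · nlinarith [mul_le_mul_of_nonneg_left hy_le hx0]
  · nlinarith [mul_le_mul_of_nonneg_right hx_le hy0]

theorem card_normClasses_mul {m n : ℕ} (hm : m ≠ 0) (hn : n ≠ 0) (h : m.Coprime n) :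
    Nat.card (normClasses (m * n)) = Nat.card (normClasses m) * Nat.card (normClasses n) := by
  let f (p : normClasses m × normClasses n) : normClasses (m * n) :=
    ⟨p.1 * p.2, mul_mem_normClasses p.1.2 p.2.2⟩
  have hf : f.Bijective := by
    constructor
    · rintro ⟨⟨_, x, hx, rfl⟩, ⟨_, y, hy, rfl⟩⟩ ⟨⟨_, x', hx', rfl⟩, ⟨_, y', hy', rfl⟩⟩ hxy
      have hassoc : Associated (x * y) (x' * y') := by
        simpa [f, Associates.mk_mul_mk, Associates.mk_eq_mk_iff_associated] using hxy
      have hxx' := hassoc.left_of_mul_of_isCoprime (isCoprime_of_norm_eq h hx hy')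
        (isCoprime_of_norm_eq h hx' hy)
      rw [mul_comm x, mul_comm x'] at hassoc
      have hyy' := hassoc.left_of_mul_of_isCoprime (isCoprime_of_norm_eq h.symm hy hx')
        (isCoprime_of_norm_eq h.symm hy' hx)
      exact Prod.ext (Subtype.ext (Associates.mk_eq_mk_iff_associated.2 hxx'))
        (Subtype.ext (Associates.mk_eq_mk_iff_associated.2 hyy'))
    · rintro ⟨_, z, hz, rfl⟩
      obtain ⟨x, y, rfl, hx, hy⟩ := exists_mul_eq_of_norm_eq_mul hm hn h hz
      exact ⟨(⟨_, x, hx, rfl⟩, ⟨_, y, hy, rfl⟩), Subtype.ext Associates.mk_mul_mk⟩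
  rw [← Nat.card_prod, Nat.card_congr (Equiv.ofBijective f hf)]

theorem card_normClasses_pow_of_dvd_prime_pow {p e f : ℕ} (hp : 1 < p) {q : ℤ[i]} (hq : Prime q)
    (hpq : (p : ℤ[i]) ∣ q ^ e) (hqn : q.norm = (p : ℤ) ^ f) (k : ℕ) :
    Nat.card (normClasses (p ^ k)) = if f ∣ k then 1 else 0 := by
  have hmem (i : ℕ) : Associates.mk (q ^ i) ∈ normClasses (p ^ k) ↔ f * i = k := by
    rw [mk_mem_normClasses, norm_pow, hqn, ← pow_mul, Nat.cast_pow]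
    exact pow_right_inj₀ (by positivity) (by exact_mod_cast hp.ne')
  have hshape : ∀ c ∈ normClasses (p ^ k), ∃ i, c = Associates.mk (q ^ i) := by
    rintro _ ⟨z, hz, rfl⟩
    have hzq : z ∣ q ^ (e * k) := (dvd_natCast_of_norm_eq hz).trans <| by
      rw [Nat.cast_pow, pow_mul]
      exact pow_dvd_pow_of_dvd hpq k
    obtain ⟨i, -, hi⟩ := (dvd_prime_pow hq _).1 hzq
    exact ⟨i, Associates.mk_eq_mk_iff_associated.2 hi⟩
  split_ifs with hfk
  · have hf : f ≠ 0 := by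
      rintro rfl
      exact hq.not_isUnit (isUnit_iff_norm_eq_one.2 (by simpa using hqn))
    obtain ⟨j, rfl⟩ := hfk
    have hset : normClasses (p ^ (f * j)) = {Associates.mk (q ^ j)} := by
      refine Set.eq_singleton_iff_unique_mem.2 ⟨(hmem j).2 rfl, fun c hc => ?_⟩
      obtain ⟨i, rfl⟩ := hshape c hc
      rw [Nat.eq_of_mul_eq_mul_left (Nat.pos_of_ne_zero hf) ((hmem i).1 hc)]
    rw [hset, Nat.card_unique]
  · have hset : normClasses (p ^ k) = ∅ := by
      refine Set.eq_empty_iff_forall_notMem.2 fun c hc => ?_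
      obtain ⟨i, rfl⟩ := hshape c hc
      exact hfk ⟨i, ((hmem i).1 hc).symm⟩
    rw [hset, Nat.card_of_isEmpty]

theorem card_normClasses_pow_of_isCoprime_star {p : ℕ} (hp : p.Prime) {π : ℤ[i]}
    (hπ : π.norm = p) (hco : IsCoprime π (star π)) (k : ℕ) :
    Nat.card (normClasses (p ^ k)) = k + 1 := by
  classical
  set τ := star π
  have hτ : τ.norm = p := (Zsqrtd.norm_conj π).trans hπ
  have hπp : Prime π := prime_of_natAbs_norm_prime (by rwa [hπ, Int.natAbs_natCast])
  have hτp : Prime τ := prime_of_natAbs_norm_prime (by rwa [hτ, Int.natAbs_natCast])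
  have hp_pos : (0 : ℤ) < p := by exact_mod_cast hp.pos
  have hp_ne_one : (p : ℤ) ≠ 1 := by exact_mod_cast hp.ne_one
  have hnorm (i j : ℕ) : (π ^ i * τ ^ j).norm = (p : ℤ) ^ (i + j) := by
    rw [Zsqrtd.norm_mul, norm_pow, norm_pow, hπ, hτ, pow_add]
  let g (i : ℕ) : Associates ℤ[i] := Associates.mk (π ^ i * τ ^ (k - i))
  have hle {i j : ℕ} (hij : g i = g j) : j ≤ i := by
    have hdvd : π ^ j ∣ π ^ i * τ ^ (k - i) :=
      (dvd_mul_right _ _).trans (Associates.mk_eq_mk_iff_associated.1 hij).symm.dvd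
    exact (pow_dvd_pow_iff hπp.ne_zero hπp.not_isUnit).1
      ((hco.pow (m := j) (n := k - i)).dvd_of_dvd_mul_right hdvd)
  have hset : normClasses (p ^ k) = ↑((Finset.range (k + 1)).image g) := by
    ext c
    simp only [Finset.coe_image, Finset.coe_range, Set.mem_image, Set.mem_Iio]
    constructor
    · rintro ⟨z, hz, rfl⟩
      have hzd : z ∣ π ^ k * τ ^ k := by
        rw [← mul_pow, ← Zsqrtd.norm_eq_mul_conj, hπ, Int.cast_natCast, ← Nat.cast_pow]
        exact dvd_natCast_of_norm_eq hz
      obtain ⟨x, y, hx, hy, rfl⟩ := exists_dvd_and_dvd_of_dvd_mul hzd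
      obtain ⟨i, -, hxi⟩ := (dvd_prime_pow hπp _).1 hx
      obtain ⟨j, -, hyj⟩ := (dvd_prime_pow hτp _).1 hy
      have hassoc := hxi.mul_mul hyj
      have hij : i + j = k := by
        rw [← pow_right_inj₀ hp_pos hp_ne_one, ← hnorm,
          ← Zsqrtd.norm_eq_of_associated (by norm_num) hassoc, hz, Nat.cast_pow]
      refine ⟨i, by omega, ?_⟩
      change Associates.mk (π ^ i * τ ^ (k - i)) = _
      rw [show k - i = j by omega]
      exact (Associates.mk_eq_mk_iff_associated.2 hassoc).symm
    · rintro ⟨i, hi, rfl⟩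
      rw [mk_mem_normClasses, hnorm, Nat.cast_pow, Nat.add_sub_cancel' (by omega)]
  rw [hset, Nat.card_coe_set_eq, Set.ncard_coe_finset, Finset.card_image_of_injOn
    (fun i _ j _ hij => le_antisymm (hle hij.symm) (hle hij)), Finset.card_range]

theorem exists_norm_eq_isCoprime_star {p : ℕ} (hp : p.Prime) (hp1 : p % 4 = 1) :
    ∃ π : ℤ[i], π.norm = p ∧ IsCoprime π (star π) := by
  have := Fact.mk hp
  obtain ⟨a, b, hab⟩ := Nat.Prime.sq_add_sq (p := p) (by omega)
  have hπ : (⟨a, b⟩ : ℤ[i]).norm = p := by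
    rw [norm_mk, ← hab]
    push_cast
    rfl
  have hπp := prime_of_natAbs_norm_prime (by rwa [hπ, Int.natAbs_natCast])
  have hτp := prime_of_natAbs_norm_prime (by rwa [Zsqrtd.norm_conj, hπ, Int.natAbs_natCast])
  refine ⟨_, hπ, hπp.irreducible.coprime_iff_not_dvd.2 fun hdvd => ?_⟩
  have hnot_sq (c : ℕ) : c ^ 2 ≠ p := fun h => not_irreducible_pow (by norm_num) (h ▸ hp)
  rcases re_eq_zero_or_im_eq_zero_or_of_associated_star
    (hπp.irreducible.associated_of_dvd hτp.irreducible hdvd) with h | h | h | h <;>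
    simp only [Nat.cast_eq_zero, Nat.cast_inj] at h
  · exact hnot_sq b (by simpa [h] using hab)
  · exact hnot_sq a (by simpa [h] using hab)
  · subst h
    omega
  · obtain ⟨rfl, rfl⟩ : a = 0 ∧ b = 0 := by omega
    exact hp.ne_zero (by simpa using hab.symm)

theorem card_normClasses_prime_pow {p : ℕ} (hp : p.Prime) (k : ℕ) :
    (Nat.card (normClasses (p ^ k)) : ℤ) = ∑ j ∈ Finset.range (k + 1), ZMod.χ₄ p ^ j := by
  have := Fact.mk hp
  rcases hp.eq_two_or_odd with rfl | hodd
  · have h2 : ((2 : ℕ) : ℤ[i]) ∣ ⟨1, 1⟩ ^ 2 := ⟨⟨0, 1⟩, by decide⟩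
    have hq : Prime (⟨1, 1⟩ : ℤ[i]) := prime_of_natAbs_norm_prime (by decide)
    rw [card_normClasses_pow_of_dvd_prime_pow (e := 2) (f := 1) hp.one_lt hq h2 (by decide)]
    simp [Finset.sum_range_succ']
  · rcases (by omega : p % 4 = 1 ∨ p % 4 = 3) with hp1 | hp3
    · obtain ⟨π, hπ, hco⟩ := exists_norm_eq_isCoprime_star hp hp1
      rw [card_normClasses_pow_of_isCoprime_star hp hπ hco, ZMod.χ₄_nat_one_mod_four hp1]
      simp
    · rw [card_normClasses_pow_of_dvd_prime_pow (e := 1) (f := 2) hp.one_lt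
        (prime_of_nat_prime_of_mod_four_eq_three p hp3) (pow_one _).symm.dvd
        (by rw [Zsqrtd.norm_natCast, sq]), ZMod.χ₄_nat_three_mod_four hp3, neg_one_geom_sum]
      by_cases hk : 2 ∣ k <;> simp [hk, Nat.even_iff] <;> omega

theorem normClasses_one : normClasses 1 = {1} := by
  ext c
  obtain ⟨z, rfl⟩ := Associates.mk_surjective c
  rw [mk_mem_normClasses, Set.mem_singleton_iff, Associates.mk_eq_one, isUnit_iff_norm_eq_one,
    Nat.cast_one]

open ArithmeticFunction in
open scoped ArithmeticFunction.zeta in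
theorem card_normClasses_eq_sum_divisors {n : ℕ} (hn : n ≠ 0) :
    (Nat.card (normClasses n) : ℤ) = ∑ d ∈ n.divisors, ZMod.χ₄ d := by
  let count : ArithmeticFunction ℤ := toArithmeticFunction fun n => Nat.card (normClasses n)
  let sumχ₄ : ArithmeticFunction ℤ := toArithmeticFunction (ZMod.χ₄ ·) * ζ
  have count_apply {n : ℕ} (hn : n ≠ 0) : count n = Nat.card (normClasses n) := if_neg hn
  have sumχ₄_apply (n : ℕ) : sumχ₄ n = ∑ d ∈ n.divisors, ZMod.χ₄ d :=
    coe_mul_zeta_apply.trans <| Finset.sum_congr rfl fun d hd =>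
      if_neg (Nat.ne_of_gt (Nat.pos_of_mem_divisors hd))
  have hcount : count.IsMultiplicative := by
    refine IsMultiplicative.iff_ne_zero.2 ⟨?_, fun {m n} hm hn h => ?_⟩
    · rw [count_apply one_ne_zero, normClasses_one, Nat.card_unique, Nat.cast_one]
    · rw [count_apply (mul_ne_zero hm hn), count_apply hm, count_apply hn,
        card_normClasses_mul hm hn h, Nat.cast_mul]
  have hsum : sumχ₄.IsMultiplicative :=
    (DirichletCharacter.isMultiplicative_toArithmeticFunction ZMod.χ₄).mul
      isMultiplicative_zeta.natCast
  have heq : count = sumχ₄ := by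
    refine (hcount.eq_iff_eq_on_prime_powers _ _ hsum).2 fun p k hp => ?_
    rw [count_apply (pow_ne_zero k hp.ne_zero), card_normClasses_prime_pow hp, sumχ₄_apply,
      Nat.sum_divisors_prime_pow hp]
    simp only [Nat.cast_pow, map_pow]
  rw [← count_apply hn, heq, sumχ₄_apply]

end GaussianInt

theorem ZMod.sum_χ₄_eq_sum_filter_odd (s : Finset ℕ) :
    ∑ d ∈ s, ZMod.χ₄ d = ∑ d ∈ s.filter (fun d => d % 2 = 1), (-1 : ℤ) ^ ((d - 1) / 2) := by
  rw [Finset.sum_filter]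
  refine Finset.sum_congr rfl fun d _ => ?_
  split_ifs with hd
  · rw [ZMod.χ₄_eq_neg_one_pow hd, show d / 2 = (d - 1) / 2 by omega]
  · rw [ZMod.χ₄_nat_eq_if_mod_four, if_pos (by omega)]

theorem two_squares_count (n : ℕ) (hn : 0 < n) :
    (Nat.card {p : ℤ × ℤ | p.1 ^ 2 + p.2 ^ 2 = (n : ℤ)} : ℤ) =
      4 * ∑ d ∈ n.divisors.filter (fun d => d % 2 = 1), (-1 : ℤ) ^ ((d - 1) / 2) := by
  let e : ℤ × ℤ ≃ GaussianInt :=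
    ⟨fun p => ⟨p.1, p.2⟩, fun z => (z.re, z.im), fun _ => rfl, fun _ => rfl⟩
  have hsq : {p : ℤ × ℤ | p.1 ^ 2 + p.2 ^ 2 = (n : ℤ)} ≃ {z : GaussianInt | z.norm = n} :=
    e.subtypeEquiv fun p => by simp [e, GaussianInt.norm_mk]
  rw [Nat.card_congr hsq, GaussianInt.card_setOf_norm_eq hn.ne', Nat.cast_mul,
    GaussianInt.card_normClasses_eq_sum_divisors hn.ne', ZMod.sum_χ₄_eq_sum_filter_odd]
  push_cast
  ring
end

section
/- For every nonnegative integer m and every nonnegative integer n, there exist integers x, y, z, w such that (x² + mx)/2 + (y² + my)/2 + (z² + mz)/2 + (w² + mw)/2 = n, where each summand (x² + mx)/2 is required to be a nonnegative integer (i.e., x ranges over integers with x² + mx ≥ 0 and x² + mx even, which holds automatically when m ≡ x (mod 2) considerations are handled; formally: every n ≥ 0 is a sum of four m-triangular numbers t_m(x) with x ∈ ℤ). -/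
/-! Completing the square, `4 (x² + m x) = (2x + m)² - m²`, so it suffices to write `8n + 4m²` as a
sum of four squares of integers `≡ m (mod 2)`. For even `m` double a four-square representation of
`2n + m²`. For odd `m` write `2M = a² + b² + c² + d²` with `M = 2n + m²` odd: parity forces the four
terms into two pairs of opposite parity, and `(a + b)² + (a - b)² = 2 (a² + b²)` then represents `4M`
by four odd squares. -/

theorem Int.sq_emod_four_eq_emod_two (x : ℤ) : x ^ 2 % 4 = x % 2 := by
  rcases x.even_or_odd' with ⟨k, rfl | rfl⟩
  · have : (2 * k) ^ 2 = 4 * k ^ 2 := by ring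
    omega
  · have : (2 * k + 1) ^ 2 = 4 * (k ^ 2 + k) + 1 := by ring
    omega

theorem Int.odd_add_and_odd_add_of_sum_four_sq_eq_two_mul_odd {a b c d M : ℤ} (hM : Odd M)
    (h : a ^ 2 + b ^ 2 + c ^ 2 + d ^ 2 = 2 * M) :
    Odd (a + b) ∧ Odd (c + d) ∨ Odd (a + c) ∧ Odd (b + d) := by
  simp only [Int.odd_iff] at hM ⊢
  have := a.sq_emod_four_eq_emod_two
  have := b.sq_emod_four_eq_emod_two
  have := c.sq_emod_four_eq_emod_two
  have := d.sq_emod_four_eq_emod_two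
  omega

theorem Int.exists_odd_sum_four_sq_eq_four_mul {a b c d M : ℤ} (hM : Odd M)
    (h : a ^ 2 + b ^ 2 + c ^ 2 + d ^ 2 = 2 * M) :
    ∃ p q r s : ℤ, Odd p ∧ Odd q ∧ Odd r ∧ Odd s ∧ p ^ 2 + q ^ 2 + r ^ 2 + s ^ 2 = 4 * M := by
  have odd_sub {x y : ℤ} (hxy : Odd (x + y)) : Odd (x - y) :=
    Int.odd_sub.2 (Int.odd_add.1 hxy)
  rcases Int.odd_add_and_odd_add_of_sum_four_sq_eq_two_mul_odd hM h with ⟨hab, hcd⟩ | ⟨hac, hbd⟩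
  · exact ⟨a + b, a - b, c + d, c - d, hab, odd_sub hab, hcd, odd_sub hcd,
      by linear_combination 2 * h⟩
  · exact ⟨a + c, a - c, b + d, b - d, hac, odd_sub hac, hbd, odd_sub hbd,
      by linear_combination 2 * h⟩

theorem Int.exists_sum_four_sq_add_mul_eq {m N p q r s : ℤ} (hp : Even (p - m))
    (hq : Even (q - m)) (hr : Even (r - m)) (hs : Even (s - m))
    (h : p ^ 2 + q ^ 2 + r ^ 2 + s ^ 2 = 4 * N + 4 * m ^ 2) :
    ∃ x y z w : ℤ, (x ^ 2 + m * x) + (y ^ 2 + m * y) + (z ^ 2 + m * z) + (w ^ 2 + m * w) = N := by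
  obtain ⟨x, hx⟩ := hp
  obtain ⟨y, hy⟩ := hq
  obtain ⟨z, hz⟩ := hr
  obtain ⟨w, hw⟩ := hs
  refine ⟨x, y, z, w, mul_left_cancel₀ four_ne_zero ?_⟩
  rw [sub_eq_iff_eq_add] at hx hy hz hw
  subst hx hy hz hw
  linear_combination h

/-- Every nonnegative integer is the sum of four `m`-triangular numbers
`t_m(x) = (x² + m·x)/2` with integer arguments (Theorem 11). -/
theorem four_m_triangular (m n : ℕ) :
    ∃ x y z w : ℤ,
      (x ^ 2 + (m : ℤ) * x) + (y ^ 2 + (m : ℤ) * y) + (z ^ 2 + (m : ℤ) * z) +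
        (w ^ 2 + (m : ℤ) * w) = 2 * (n : ℤ) := by
  suffices ∃ p q r s : ℤ, Even (p - m) ∧ Even (q - m) ∧ Even (r - m) ∧ Even (s - m) ∧
      p ^ 2 + q ^ 2 + r ^ 2 + s ^ 2 = 4 * (2 * n) + 4 * (m : ℤ) ^ 2 by
    obtain ⟨p, q, r, s, hp, hq, hr, hs, h⟩ := this
    exact Int.exists_sum_four_sq_add_mul_eq hp hq hr hs h
  rcases Nat.even_or_odd m with hm | hm
  · obtain ⟨a, b, c, d, h⟩ := Nat.sum_four_squares (2 * n + m ^ 2)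
    have h' : (a : ℤ) ^ 2 + b ^ 2 + c ^ 2 + d ^ 2 = 2 * n + m ^ 2 := by exact_mod_cast h
    have hm : Even (m : ℤ) := hm.natCast
    refine ⟨2 * a, 2 * b, 2 * c, 2 * d, (even_two_mul _).sub hm, (even_two_mul _).sub hm,
      (even_two_mul _).sub hm, (even_two_mul _).sub hm, by linear_combination 4 * h'⟩
  · obtain ⟨a, b, c, d, h⟩ := Nat.sum_four_squares (2 * (2 * n + m ^ 2))
    have h' : (a : ℤ) ^ 2 + b ^ 2 + c ^ 2 + d ^ 2 = 2 * (2 * n + m ^ 2) := by exact_mod_cast h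
    have hm : Odd (m : ℤ) := hm.natCast
    obtain ⟨p, q, r, s, hp, hq, hr, hs, hpqrs⟩ :=
      Int.exists_odd_sum_four_sq_eq_four_mul ((even_two_mul _).add_odd hm.pow) h'
    exact ⟨p, q, r, s, hp.sub_odd hm, hq.sub_odd hm, hr.sub_odd hm, hs.sub_odd hm,
      by linear_combination hpqrs⟩
end

section
/- If n = (2l+1)m where l ≥ 0 and m ≥ 1 range over all factorizations of n into a positive integer times an odd positive integer, then Σ_{m=1}^{∞} q^m/(1+q^{2m}) = Σ_{n=1}^{∞} (Σ_{d odd, d∣n} (-1)^((d-1)/2)) q^n for |q| < 1. -/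
/-!
With `χ₄` the non-principal character mod 4, the `m`-th term is `x / (1 + x ^ 2) = ∑ₖ χ₄(k) xᵏ`
at `x = qᵐ`; the double series `∑ₘ ∑ₖ χ₄(k) q^(km)` converges absolutely, so it may be regrouped
according to `n = km`, and `χ₄(d) = (-1)^((d-1)/2)` on odd `d` and `0` on even `d`.
-/

open ZMod

section Lambert

variable {R : Type*} [NormedRing R] [NormOneClass R] [CompleteSpace R]

theorem summable_lambert_of_norm_le {a : ℕ → R} {C : ℝ} (ha : ∀ n, ‖a n‖ ≤ C) {q : R}
    (hq : ‖q‖ < 1) : Summable fun c : ℕ+ × ℕ+ ↦ a c.2 * q ^ (c.1 * c.2 : ℕ) := by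
  have hnorm : ‖‖q‖‖ < 1 := by rwa [norm_norm]
  refine ((summable_prod_mul_pow 0 hnorm).mul_left C).of_norm_bounded fun c ↦ ?_
  simp only [pow_zero, one_mul]
  exact (norm_mul_le _ _).trans
    (mul_le_mul (ha c.2) (norm_pow_le _ _) (norm_nonneg _) ((norm_nonneg _).trans (ha 0)))

theorem tsum_lambert_eq_tsum_sum_divisors {a : ℕ → R} {C : ℝ} (ha : ∀ n, ‖a n‖ ≤ C) {q : R}
    (hq : ‖q‖ < 1) :
    ∑' m : ℕ+, ∑' k : ℕ+, a k * q ^ (m * k : ℕ) =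
      ∑' n : ℕ+, (∑ d ∈ (n : ℕ).divisors, a d) * q ^ (n : ℕ) := by
  have hsum := summable_lambert_of_norm_le ha hq
  rw [← hsum.tsum_prod, ← sigmaAntidiagonalEquivProd.tsum_eq]
  refine (Summable.tsum_sigma (sigmaAntidiagonalEquivProd.summable_iff.2 hsum)).trans
    (tsum_congr fun n ↦ ?_)
  rw [tsum_fintype, Finset.univ_eq_attach, Finset.sum_mul,
    ← Nat.sum_divisorsAntidiagonal' (fun (_ d : ℕ) ↦ a d * q ^ (n : ℕ)),
    ← Finset.sum_attach _ (fun x : ℕ × ℕ ↦ a x.2 * q ^ (n : ℕ))]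
  refine Finset.sum_congr rfl fun x _ ↦ ?_
  simp [sigmaAntidiagonalEquivProd, divisorsAntidiagonalFactors,
    (Nat.mem_divisorsAntidiagonal.1 x.2).1]

end Lambert

theorem ZMod.χ₄_natCast_eq_ite {R : Type*} [Ring R] (d : ℕ) :
    (χ₄ d : R) = if d % 2 = 1 then (-1) ^ ((d - 1) / 2) else 0 := by
  split_ifs with hd
  · rw [χ₄_eq_neg_one_pow hd, show d / 2 = (d - 1) / 2 by omega, Int.cast_pow, Int.cast_neg,
      Int.cast_one]
  · rw [χ₄_nat_eq_if_mod_four, if_pos (by omega), Int.cast_zero]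

theorem ZMod.hasSum_χ₄_mul_pow {𝕜 : Type*} [NormedField 𝕜] {x : 𝕜}
    (hx : ‖x‖ < 1) : HasSum (fun k : ℕ ↦ (χ₄ k : 𝕜) * x ^ k) (x / (1 + x ^ 2)) := by
  have hx2 : ‖-x ^ 2‖ < 1 := by
    rw [norm_neg, norm_pow]
    exact pow_lt_one₀ (norm_nonneg _) hx two_ne_zero
  have heven : HasSum (fun l : ℕ ↦ (χ₄ (2 * l : ℕ) : 𝕜) * x ^ (2 * l)) 0 := by
    refine hasSum_zero.congr_fun fun l ↦ ?_
    rw [χ₄_natCast_eq_ite, if_neg (by omega), zero_mul]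
  have hodd : HasSum (fun l : ℕ ↦ (χ₄ (2 * l + 1 : ℕ) : 𝕜) * x ^ (2 * l + 1))
      ((1 - -x ^ 2)⁻¹ * x) := by
    refine ((hasSum_geometric_of_norm_lt_one hx2).mul_right x).congr_fun fun l ↦ ?_
    rw [χ₄_natCast_eq_ite, if_pos (by omega), show (2 * l + 1 - 1) / 2 = l by omega]
    ring
  rw [div_eq_inv_mul, ← sub_neg_eq_add, ← zero_add ((1 - -x ^ 2)⁻¹ * x)]
  exact HasSum.even_add_odd (f := fun k : ℕ ↦ (χ₄ k : 𝕜) * x ^ k) heven hodd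

theorem Finset.sum_filter_odd_neg_one_pow_eq_sum_χ₄ {R : Type*} [Ring R] (s : Finset ℕ) :
    ∑ d ∈ s.filter (fun d ↦ d % 2 = 1), (-1 : R) ^ ((d - 1) / 2) = ∑ d ∈ s, (χ₄ d : R) := by
  simp only [Finset.sum_filter, χ₄_natCast_eq_ite]

theorem lambert_series_two_squares (q : ℝ) (hq : |q| < 1) :
    ∑' m : ℕ, q ^ (m + 1) / (1 + q ^ (2 * (m + 1))) =
      ∑' n : ℕ,
        (∑ d ∈ (n + 1).divisors.filter (fun d => d % 2 = 1),
            (-1 : ℝ) ^ ((d - 1) / 2)) * q ^ (n + 1) := by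
  have hχ₄ : ∀ n : ℕ, ‖(χ₄ n : ℝ)‖ ≤ 1 := fun n ↦ by
    rw [χ₄_natCast_eq_ite]
    split_ifs <;> simp
  have hinner (m : ℕ+) :
      ∑' k : ℕ+, (χ₄ k : ℝ) * q ^ (m * k : ℕ) = q ^ (m : ℕ) / (1 + q ^ (2 * m : ℕ)) := by
    have hm : ‖q ^ (m : ℕ)‖ < 1 := by
      rw [norm_pow]; exact pow_lt_one₀ (norm_nonneg _) hq m.ne_zero
    rw [tsum_pnat_eq_tsum_of_eq_zero (f := fun k ↦ (χ₄ k : ℝ) * q ^ (m * k : ℕ)) (by simp),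
      mul_comm 2, pow_mul]
    simp_rw [pow_mul]
    exact (hasSum_χ₄_mul_pow hm).tsum_eq
  calc ∑' m : ℕ, q ^ (m + 1) / (1 + q ^ (2 * (m + 1)))
      = ∑' m : ℕ+, ∑' k : ℕ+, (χ₄ k : ℝ) * q ^ (m * k : ℕ) := by
        simp_rw [hinner, tsum_pnat_eq_tsum_succ (f := fun m ↦ q ^ m / (1 + q ^ (2 * m)))]
    _ = ∑' n : ℕ+, (∑ d ∈ (n : ℕ).divisors, (χ₄ d : ℝ)) * q ^ (n : ℕ) :=
        tsum_lambert_eq_tsum_sum_divisors hχ₄ (by rwa [Real.norm_eq_abs])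
    _ = _ := by
        simp_rw [tsum_pnat_eq_tsum_succ (f := fun n ↦ (∑ d ∈ n.divisors, (χ₄ d : ℝ)) * q ^ n),
          Finset.sum_filter_odd_neg_one_pow_eq_sum_χ₄]
end

section
/- For |q| < 1, the identity ψ(q) = (q²; q²)_∞ / (q; q²)_∞ holds, i.e., Σ_{n=0}^{∞} q^{n(n+1)/2} = Π_{n=1}^{∞} (1 − q^{2n}) / Π_{n=0}^{∞} (1 − q^{2n+1}). -/
/-!
Rothe's q-binomial theorem `∏_{j<2N} (1 + z q^j) = ∑_k [2N, k]_q q^(k choose 2) z^k`,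
taken at `z = q^(1-N)`, is the finite form of Jacobi's triple product at `z = 1`:
`(-1; q)_N (-q; q)_N = ∑_{m=-N}^{N} [2N, N+m]_q q^(m(m+1)/2)`.
As `N → ∞` each `[2N, N+m]_q` tends to `1 / (q; q)_∞` and all of them stay bounded, so by
Tannery's theorem `2 (-q; q)_∞² = 2 ψ(q) / (q; q)_∞`, the indices `m` and `-1-m`
contributing the same power of `q`. Finally `(q; q)_∞ (-q; q)_∞ = (q²; q²)_∞` and
`(q; q)_∞ = (q; q²)_∞ (q²; q²)_∞` give Euler's `(-q; q)_∞ (q; q²)_∞ = 1`, which turns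
`ψ(q) = (q; q)_∞ (-q; q)_∞²` into the stated quotient.
-/

open Finset Filter Topology

/-- `qPochhammer q n` is the q-Pochhammer symbol `(q; q)_n`. -/
def qPochhammer {R : Type*} [CommRing R] (q : R) (n : ℕ) : R :=
  ∏ i ∈ range n, (1 - q ^ (i + 1))

def gaussBinom {R : Type*} [CommRing R] (q : R) : ℕ → ℕ → R
  | _, 0 => 1
  | 0, _ + 1 => 0
  | n + 1, k + 1 => gaussBinom q n k + q ^ (k + 1) * gaussBinom q n (k + 1)

theorem Nat.succ_choose_two (k : ℕ) : (k + 1).choose 2 = k.choose 2 + k := by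
  rw [Nat.choose_succ_succ, Nat.choose_one_right, add_comm]

theorem Nat.choose_two_add_choose_two_add (a b : ℕ) :
    a.choose 2 + (a + b).choose 2 + (a + b) = (b + 1).choose 2 + a * (a + b) := by
  have h : ((a.choose 2 + (a + b).choose 2 + (a + b) : ℕ) : ℚ) =
      ((b + 1).choose 2 + a * (a + b) : ℕ) := by
    push_cast [Nat.cast_choose_two]; ring
  exact_mod_cast h

namespace gaussBinom

variable {R : Type*} [CommRing R] (q : R)

@[simp]
theorem zero_right (n : ℕ) : gaussBinom q n 0 = 1 := by cases n <;> rfl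

theorem succ_succ (n k : ℕ) :
    gaussBinom q (n + 1) (k + 1) = gaussBinom q n k + q ^ (k + 1) * gaussBinom q n (k + 1) := rfl

theorem eq_zero_of_lt {n k : ℕ} (h : n < k) : gaussBinom q n k = 0 := by
  induction n generalizing k with
  | zero => obtain ⟨k, rfl⟩ := Nat.exists_eq_add_of_lt h; rfl
  | succ n ih =>
    obtain ⟨k, rfl⟩ := Nat.exists_eq_add_of_lt (Nat.zero_lt_of_lt h)
    rw [succ_succ, ih (by omega), ih (by omega), mul_zero, add_zero]

theorem mul_qPochhammer_mul_qPochhammer {n k : ℕ} (h : k ≤ n) :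
    gaussBinom q n k * qPochhammer q k * qPochhammer q (n - k) = qPochhammer q n := by
  induction n generalizing k with
  | zero => obtain rfl := Nat.le_zero.1 h; simp [qPochhammer]
  | succ n ih =>
    rcases k with _ | k
    · simp [qPochhammer]
    rcases (Nat.le_of_succ_le_succ h).eq_or_lt with rfl | hk
    · have := ih le_rfl
      simp only [succ_succ, eq_zero_of_lt q k.lt_succ_self, Nat.sub_self, qPochhammer,
        prod_range_succ, prod_range_zero] at this ⊢
      linear_combination (1 - q ^ (k + 1)) * this
    obtain ⟨m, rfl⟩ := Nat.exists_eq_add_of_lt hk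
    have h₁ := ih (k := k) (by omega)
    have h₂ := ih (k := k + 1) (by omega)
    rw [show k + m + 1 - k = m + 1 by omega] at h₁
    rw [show k + m + 1 - (k + 1) = m by omega] at h₂
    rw [show k + m + 1 + 1 - (k + 1) = m + 1 by omega]
    simp only [qPochhammer, prod_range_succ] at h₁ h₂ ⊢
    rw [succ_succ]
    linear_combination (1 - q ^ (k + 1)) * h₁ + q ^ (k + 1) * (1 - q ^ (m + 1)) * h₂

theorem prod_one_add_mul_pow_eq_sum (z : R) (n : ℕ) :
    ∏ j ∈ range n, (1 + z * q ^ j) =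
      ∑ k ∈ range (n + 1), gaussBinom q n k * q ^ k.choose 2 * z ^ k := by
  induction n generalizing z with
  | zero => simp
  | succ n ih =>
    set a : ℕ → R := fun k => gaussBinom q n k * q ^ (k + 1).choose 2 * z ^ k
    have hprod : ∏ j ∈ range n, (1 + z * q * q ^ j) = ∑ k ∈ range (n + 1), a k := by
      rw [ih]
      refine sum_congr rfl fun k _ => ?_
      simp only [a, Nat.succ_choose_two, pow_add, mul_pow]
      ring
    have hfirst : ∑ k ∈ range (n + 1), z * a k =
        ∑ k ∈ range (n + 1), gaussBinom q n k * q ^ (k + 1).choose 2 * z ^ (k + 1) :=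
      sum_congr rfl fun k _ => by simp only [a]; ring
    have hlast : ∑ k ∈ range (n + 1), q ^ (k + 1) * gaussBinom q n (k + 1) *
        q ^ (k + 1).choose 2 * z ^ (k + 1) = ∑ k ∈ range n, a (k + 1) := by
      rw [sum_range_succ, eq_zero_of_lt q (lt_add_one n), mul_zero, zero_mul, zero_mul, add_zero]
      refine sum_congr rfl fun k _ => ?_
      simp only [a, Nat.succ_choose_two, pow_add]
      ring
    calc ∏ j ∈ range (n + 1), (1 + z * q ^ j)
        = (1 + z) * ∑ k ∈ range (n + 1), a k := by
          rw [prod_range_succ', mul_comm, ← hprod]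
          simp [pow_succ', mul_assoc]
      _ = ∑ k ∈ range (n + 1), z * a k + (∑ k ∈ range n, a (k + 1) + a 0) := by
          rw [add_mul, one_mul, mul_sum, sum_range_succ' a, add_comm]
      _ = _ := by
          rw [sum_range_succ' (fun k => gaussBinom q (n + 1) k * q ^ k.choose 2 * z ^ k)]
          simp only [succ_succ, add_mul, sum_add_distrib]
          rw [hfirst, hlast]
          simp [a, add_assoc]

section Field

variable {K : Type*} [Field K] (q : K)

theorem eq_div {n k : ℕ} (h : k ≤ n) (hP : qPochhammer q n ≠ 0) :
    gaussBinom q n k = qPochhammer q n / (qPochhammer q k * qPochhammer q (n - k)) := by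
  rw [← mul_qPochhammer_mul_qPochhammer q h, mul_assoc] at hP ⊢
  rw [mul_div_cancel_right₀ _ (right_ne_zero_of_mul hP)]

theorem symm {n k : ℕ} (h : k ≤ n) (hP : qPochhammer q n ≠ 0) :
    gaussBinom q n (n - k) = gaussBinom q n k := by
  rw [eq_div q (Nat.sub_le n k) hP, eq_div q h hP, Nat.sub_sub_self h, mul_comm]

end Field

end gaussBinom

section JacobiFinite

variable {K : Type*} [Field K] {q : K}

theorem pow_choose_two_mul_prod_one_add_inv_pow_mul (hq0 : q ≠ 0) (N : ℕ) :
    q ^ N.choose 2 * ∏ j ∈ range (2 * N), (1 + (q ^ N)⁻¹ * q * q ^ j) =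
      (∏ i ∈ range N, (1 + q ^ i)) * ∏ i ∈ range N, (1 + q ^ (i + 1)) := by
  have hlow : q ^ N.choose 2 * ∏ j ∈ range N, (1 + (q ^ N)⁻¹ * q * q ^ j) =
      ∏ i ∈ range N, (1 + q ^ i) := by
    rw [← prod_range_reflect, Nat.choose_two_right, ← sum_range_id, ← prod_pow_eq_pow_sum,
      ← prod_mul_distrib]
    refine prod_congr rfl fun i hi => ?_
    have hpow : q * q ^ (N - 1 - i) * q ^ i = q ^ N := by
      rw [← pow_succ', ← pow_add]
      congr 1
      have := mem_range.1 hi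
      omega
    rw [← hpow]
    field_simp
    ring
  have hhigh : ∀ i, (q ^ N)⁻¹ * q * q ^ (N + i) = q ^ (i + 1) := fun i => by
    rw [pow_add, pow_succ]
    field_simp
  rw [two_mul, prod_range_add, ← mul_assoc, hlow]
  simp_rw [hhigh]

theorem prod_one_add_pow_mul_prod_one_add_pow_succ (hq0 : q ≠ 0) {N : ℕ}
    (hP : qPochhammer q (2 * N) ≠ 0) :
    (∏ i ∈ range N, (1 + q ^ i)) * ∏ i ∈ range N, (1 + q ^ (i + 1)) =
      ∑ n ∈ range (N + 1), gaussBinom q (2 * N) (N + n) * q ^ (n + 1).choose 2 +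
        ∑ n ∈ range N, gaussBinom q (2 * N) (N + 1 + n) * q ^ (n + 1).choose 2 := by
  have hterm : ∀ k n, N.choose 2 + k.choose 2 + k = (n + 1).choose 2 + N * k → ∀ b : K,
      q ^ N.choose 2 * (b * q ^ k.choose 2 * ((q ^ N)⁻¹ * q) ^ k) =
        b * q ^ (n + 1).choose 2 := by
    intro k n h b
    calc q ^ N.choose 2 * (b * q ^ k.choose 2 * ((q ^ N)⁻¹ * q) ^ k)
        = b * q ^ (N.choose 2 + k.choose 2 + k) * (q ^ (N * k))⁻¹ := by
          rw [mul_pow, inv_pow, ← pow_mul]; ring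
      _ = b * q ^ (n + 1).choose 2 := by
          rw [h, pow_add, mul_assoc, mul_inv_cancel_right₀ (pow_ne_zero _ hq0)]
  rw [← pow_choose_two_mul_prod_one_add_inv_pow_mul hq0, gaussBinom.prod_one_add_mul_pow_eq_sum,
    mul_sum, show 2 * N + 1 = N + (N + 1) by ring, sum_range_add, add_comm]
  congr 1
  · exact sum_congr rfl fun n _ => hterm _ n (Nat.choose_two_add_choose_two_add N n) _
  · rw [← sum_range_reflect]
    refine sum_congr rfl fun n hn => ?_
    obtain ⟨k, rfl⟩ : ∃ k, N = k + n + 1 := ⟨N - n - 1, by have := mem_range.1 hn; omega⟩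
    rw [show k + n + 1 - 1 - n = k by omega, ← gaussBinom.symm q (by omega) hP,
      show 2 * (k + n + 1) - k = k + n + 1 + 1 + n by omega]
    refine hterm k n ?_ _
    rw [Nat.succ_choose_two]
    linarith [Nat.choose_two_add_choose_two_add k n]

end JacobiFinite

section Analytic

variable {𝕜 : Type*} [NormedField 𝕜] {q : 𝕜}

theorem summable_norm_pow_comp (hq : ‖q‖ < 1) {f : ℕ → ℕ} (hf : ∀ n, n ≤ f n) :
    Summable fun n => ‖q ^ f n‖ := by
  simp_rw [norm_pow]
  exact (summable_geometric_of_lt_one (norm_nonneg q) hq).of_nonneg_of_le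
    (fun n => by positivity) fun n => pow_le_pow_of_le_one (norm_nonneg q) hq.le (hf n)

theorem one_sub_pow_ne_zero (hq : ‖q‖ < 1) {n : ℕ} (hn : n ≠ 0) : 1 - q ^ n ≠ 0 :=
  sub_ne_zero.2 fun h => by
    have := pow_lt_one₀ (norm_nonneg q) hq hn
    rw [← norm_pow, ← h, norm_one] at this
    exact lt_irrefl _ this

theorem qPochhammer_ne_zero (hq : ‖q‖ < 1) (n : ℕ) : qPochhammer q n ≠ 0 :=
  prod_ne_zero_iff.2 fun i _ => one_sub_pow_ne_zero hq i.succ_ne_zero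

variable [CompleteSpace 𝕜]

theorem multipliable_one_sub_pow_comp (hq : ‖q‖ < 1) {f : ℕ → ℕ} (hf : ∀ n, n ≤ f n) :
    Multipliable fun n => 1 - q ^ f n := by
  simpa [sub_eq_add_neg] using multipliable_one_add_of_summable (f := fun n => -q ^ f n)
    (by simpa using summable_norm_pow_comp hq hf)

theorem multipliable_one_add_pow_succ (hq : ‖q‖ < 1) : Multipliable fun n => 1 + q ^ (n + 1) :=
  multipliable_one_add_of_summable (summable_norm_pow_comp hq fun n => n.le_succ)

theorem tprod_one_sub_pow_succ_ne_zero (hq : ‖q‖ < 1) : ∏' n, (1 - q ^ (n + 1)) ≠ 0 := by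
  simp_rw [sub_eq_add_neg]
  refine tprod_one_add_ne_zero_of_summable (fun n => ?_)
    (by simpa using summable_norm_pow_comp hq fun n => n.le_succ)
  simpa [← sub_eq_add_neg] using one_sub_pow_ne_zero hq n.succ_ne_zero

theorem tendsto_qPochhammer (hq : ‖q‖ < 1) :
    Tendsto (qPochhammer q) atTop (𝓝 (∏' n, (1 - q ^ (n + 1)))) :=
  (multipliable_one_sub_pow_comp hq fun n => n.le_succ).hasProd.tendsto_prod_nat

theorem exists_norm_gaussBinom_le (hq : ‖q‖ < 1) : ∃ C, ∀ n k, ‖gaussBinom q n k‖ ≤ C := by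
  have hP := tendsto_qPochhammer hq
  obtain ⟨B, hB⟩ := (Metric.isBounded_range_of_tendsto _ hP).exists_norm_le
  obtain ⟨B', hB'⟩ := (Metric.isBounded_range_of_tendsto _
    (hP.inv₀ (tprod_one_sub_pow_succ_ne_zero hq))).exists_norm_le
  have hB0 : 0 ≤ B := (norm_nonneg _).trans (hB _ ⟨0, rfl⟩)
  have hB'0 : 0 ≤ B' := (norm_nonneg _).trans (hB' _ ⟨0, rfl⟩)
  refine ⟨B * B' * B', fun n k => ?_⟩
  rcases le_or_gt k n with h | h
  · rw [gaussBinom.eq_div q h (qPochhammer_ne_zero hq n), div_eq_mul_inv, mul_inv, ← mul_assoc]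
    simp only [norm_mul, norm_inv]
    gcongr
    · exact hB _ ⟨n, rfl⟩
    · simpa using hB' _ ⟨k, rfl⟩
    · simpa using hB' _ ⟨n - k, rfl⟩
  · rw [gaussBinom.eq_zero_of_lt q h, norm_zero]
    positivity

theorem tendsto_gaussBinom_two_mul_add (hq : ‖q‖ < 1) (j : ℕ) :
    Tendsto (fun N => gaussBinom q (2 * N) (N + j)) atTop (𝓝 (∏' n, (1 - q ^ (n + 1)))⁻¹) := by
  have hP := tendsto_qPochhammer hq
  have hP0 := tprod_one_sub_pow_succ_ne_zero hq
  have htwo : Tendsto (fun N : ℕ => 2 * N) atTop atTop :=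
    tendsto_atTop_mono (fun N => Nat.le_mul_of_pos_left N two_pos) tendsto_id
  have hlim := (hP.comp htwo).div ((hP.comp (tendsto_add_atTop_nat j)).mul
    (hP.comp (tendsto_sub_atTop_nat j))) (mul_ne_zero hP0 hP0)
  rw [div_mul_cancel_left₀ hP0] at hlim
  refine hlim.congr' ?_
  filter_upwards [eventually_ge_atTop j] with N hN
  rw [gaussBinom.eq_div q (by omega) (qPochhammer_ne_zero hq _),
    show 2 * N - (N + j) = N - j by omega]
  rfl

theorem tendsto_tsum_gaussBinom_two_mul_mul (hq : ‖q‖ < 1) {c : ℕ → 𝕜}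
    (hc : Summable fun n => ‖c n‖) (j : ℕ) :
    Tendsto (fun N => ∑' n, gaussBinom q (2 * N) (N + j + n) * c n) atTop
      (𝓝 ((∏' n, (1 - q ^ (n + 1)))⁻¹ * ∑' n, c n)) := by
  obtain ⟨C, hC⟩ := exists_norm_gaussBinom_le hq
  rw [← tsum_mul_left]
  refine tendsto_tsum_of_dominated_convergence (hc.mul_left C) (fun n => ?_)
    (Eventually.of_forall fun N n => ?_)
  · simpa only [add_assoc] using (tendsto_gaussBinom_two_mul_add hq (j + n)).mul_const (c n)
  · rw [norm_mul]
    exact mul_le_mul_of_nonneg_right (hC _ _) (norm_nonneg _)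

theorem tsum_pow_choose_two_eq [CharZero 𝕜] (hq : ‖q‖ < 1) :
    ∑' n, q ^ (n + 1).choose 2 =
      (∏' n, (1 - q ^ (n + 1))) * (∏' n, (1 + q ^ (n + 1))) ^ 2 := by
  have hle : ∀ n, n ≤ (n + 1).choose 2 := fun n => by
    rw [Nat.succ_choose_two]; exact Nat.le_add_left n _
  rcases eq_or_ne q 0 with rfl | hq0
  · rw [tsum_eq_single 0 fun n hn => zero_pow (by have := hle n; omega)]
    simp
  have hc := summable_norm_pow_comp hq hle
  have hA := (multipliable_one_add_pow_succ hq).hasProd.tendsto_prod_nat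
  have hA' : Tendsto (fun N => ∏ i ∈ range N, (1 + q ^ i)) atTop
      (𝓝 ((∏' n, (1 + q ^ (n + 1))) * 2)) := by
    rw [← tendsto_add_atTop_iff_nat 1]
    simp_rw [prod_range_succ', pow_zero, one_add_one_eq_two]
    exact hA.mul_const 2
  have hfin : ∀ N, (∏ i ∈ range N, (1 + q ^ i)) * ∏ i ∈ range N, (1 + q ^ (i + 1)) =
      ∑' n, gaussBinom q (2 * N) (N + 0 + n) * q ^ (n + 1).choose 2 +
        ∑' n, gaussBinom q (2 * N) (N + 1 + n) * q ^ (n + 1).choose 2 := fun N => by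
    rw [prod_one_add_pow_mul_prod_one_add_pow_succ hq0 (qPochhammer_ne_zero hq _),
      tsum_eq_sum (s := range (N + 1)), tsum_eq_sum (s := range N), add_zero]
    all_goals
      intro n hn
      rw [gaussBinom.eq_zero_of_lt q (by rw [mem_range] at hn; omega), zero_mul]
  have hlim := tendsto_nhds_unique ((hA'.mul hA).congr hfin)
    ((tendsto_tsum_gaussBinom_two_mul_mul hq hc 0).add
      (tendsto_tsum_gaussBinom_two_mul_mul hq hc 1))
  have hP0 : (∏' n, (1 - q ^ (n + 1))) * (∏' n, (1 - q ^ (n + 1)))⁻¹ = 1 :=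
    mul_inv_cancel₀ (tprod_one_sub_pow_succ_ne_zero hq)
  linear_combination
    (-(∏' n, (1 - q ^ (n + 1))) / 2) * hlim - (∑' n, q ^ (n + 1).choose 2) * hP0

theorem tprod_one_sub_pow_two_mul_succ (hq : ‖q‖ < 1) :
    ∏' n, (1 - q ^ (2 * (n + 1))) =
      (∏' n, (1 - q ^ (n + 1))) * ∏' n, (1 + q ^ (n + 1)) := by
  rw [← ((multipliable_one_sub_pow_comp hq (Nat.le_add_right · 1)).hasProd.mul
    (multipliable_one_add_pow_succ hq).hasProd).tprod_eq]
  congr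
  funext n
  ring

theorem tprod_one_sub_pow_succ_eq_mul (hq : ‖q‖ < 1) :
    ∏' n, (1 - q ^ (n + 1)) =
      (∏' n, (1 - q ^ (2 * n + 1))) * ∏' n, (1 - q ^ (2 * (n + 1))) := by
  rw [← tprod_even_mul_odd (f := fun n => 1 - q ^ (n + 1))
    (multipliable_one_sub_pow_comp hq fun n => by omega)
    (multipliable_one_sub_pow_comp hq fun n => by omega)]
  rfl

theorem tprod_one_sub_pow_two_mul_add_one_mul_tprod_one_add_pow_succ (hq : ‖q‖ < 1) :
    (∏' n, (1 - q ^ (2 * n + 1))) * ∏' n, (1 + q ^ (n + 1)) = 1 := by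
  have hP := tprod_one_sub_pow_succ_eq_mul hq
  refine mul_left_cancel₀ (tprod_one_sub_pow_succ_ne_zero hq) ?_
  linear_combination -(∏' n, (1 - q ^ (2 * n + 1))) * tprod_one_sub_pow_two_mul_succ hq - hP

end Analytic

theorem psi_product_formula (q : ℂ) (hq : ‖q‖ < 1) :
    ∑' n : ℕ, q ^ (n * (n + 1) / 2) =
      (∏' n : ℕ, (1 - q ^ (2 * (n + 1)))) / ∏' n : ℕ, (1 - q ^ (2 * n + 1)) := by
  have hEuler := tprod_one_sub_pow_two_mul_add_one_mul_tprod_one_add_pow_succ hq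
  have hexp : ∀ n : ℕ, n * (n + 1) / 2 = (n + 1).choose 2 := fun n => by
    rw [Nat.choose_two_right, Nat.add_sub_cancel, mul_comm]
  simp_rw [hexp]
  rw [tsum_pow_choose_two_eq hq, eq_div_iff (left_ne_zero_of_mul_eq_one hEuler),
    tprod_one_sub_pow_two_mul_succ hq]
  linear_combination (∏' n : ℕ, (1 - q ^ (n + 1))) * (∏' n : ℕ, (1 + q ^ (n + 1))) * hEuler
end
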